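/- Let R₁ = [[1,0,0,0],[0,1,0,0],[0,0,1,0]] and R₂ = [[0,1,0,0],[0,0,1,0],[0,0,0,1]] be real 3×4 matrices, and define the Hermitian 7×7 matrices H₁ = [[0, R₁],[R₁ᵀ, 0]], H₂ = [[0, R₂],[R₂ᵀ, 0]], H₃ = [[I₃, 0],[0, −I₄]]. Then every nonzero real linear combination c₁H₁ + c₂H₂ + c₃H₃ has at least 3 positive and at least 3 negative eigenvalues. -/

import Mathlib

open Matrix

noncomputable def R1 : Matrix (Fin 3) (Fin 4) ℝ :=
  !![1, 0, 0, 0; 0, 1, 0, 0; 0, 0, 1, 0]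

noncomputable def R2 : Matrix (Fin 3) (Fin 4) ℝ :=
  !![0, 1, 0, 0; 0, 0, 1, 0; 0, 0, 0, 1]

noncomputable def Hmat : Fin 3 → Matrix (Fin 3 ⊕ Fin 4) (Fin 3 ⊕ Fin 4) ℝ :=
  ![Matrix.fromBlocks 0 R1 R1ᵀ 0,
    Matrix.fromBlocks 0 R2 R2ᵀ 0,
    Matrix.fromBlocks 1 0 0 (-1)]

/-!
The quadratic form of `c₁H₁ + c₂H₂ + c₃H₃` at `(x, y) ∈ ℝ³ × ℝ⁴` is
`c₃ (|x|² - |y|²) + 2 x ⬝ B y` with `B = c₁R₁ + c₂R₂`. By Sylvester's law of inertia the number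
of positive (negative) eigenvalues is the largest dimension of a subspace on which this form is
positive (negative) definite. If `c₃ ≠ 0`, the coordinate subspaces `ℝ³` and `ℝ⁴` are definite of
opposite signs. If `c₃ = 0`, then `(c₁, c₂) ≠ 0`, so `Bᵀ` is injective (its matrix is banded with
`c₁` on the diagonal and `c₂` below it) and the form equals `±2 |Bᵀx|²` on the graphs `y = ±Bᵀx`.
-/

open QuadraticForm QuadraticMap

theorem Matrix.toQuadraticForm'_apply {n R : Type*} [Fintype n] [DecidableEq n] [CommRing R]
    (A : Matrix n n R) (x : n → R) :
    A.toQuadraticForm' x = x ⬝ᵥ A *ᵥ x :=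
  Matrix.toLinearMap₂'_apply' A x x

theorem Matrix.dotProduct_self_pos {n R : Type*} [Fintype n] [Ring R] [LinearOrder R]
    [IsStrictOrderedRing R] {v : n → R} (hv : v ≠ 0) : 0 < v ⬝ᵥ v :=
  (Finset.sum_nonneg fun i _ => mul_self_nonneg (v i)).lt_of_ne' (dotProduct_self_eq_zero.not.2 hv)

section Signature

variable {𝕜 M V : Type*} [Field 𝕜] [LinearOrder 𝕜] [AddCommGroup M] [Module 𝕜 M]
  [Module.Finite 𝕜 M] [AddCommGroup V] [Module 𝕜 V]

theorem QuadraticForm.finrank_le_sigPos_of_pos_comp {Q : QuadraticForm 𝕜 M} (f : V →ₗ[𝕜] M)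
    (hf : ∀ v ≠ 0, 0 < Q (f v)) : Module.finrank 𝕜 V ≤ sigPos Q := by
  have hinj : Function.Injective f := by
    refine (injective_iff_map_eq_zero f).2 fun v hv => ?_
    by_contra hv0
    simpa [hv] using hf v hv0
  rw [← LinearMap.finrank_range_of_inj hinj]
  refine le_sigPos_of_posDef Q fun ⟨_, v, rfl⟩ hw => ?_
  exact hf v fun hv => hw (by simp [hv])

theorem QuadraticForm.finrank_le_sigPos_of_pos_sumElim {m n : Type*} [Finite m] [Finite n]
    {Q : QuadraticForm 𝕜 (m ⊕ n → 𝕜)} (f : V →ₗ[𝕜] m → 𝕜) (g : V →ₗ[𝕜] n → 𝕜)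
    (h : ∀ v ≠ 0, 0 < Q (Sum.elim (f v) (g v))) : Module.finrank 𝕜 V ≤ sigPos Q :=
  finrank_le_sigPos_of_pos_comp
    ((LinearEquiv.sumArrowLequivProdArrow m n 𝕜 𝕜).symm.toLinearMap ∘ₗ f.prod g) h

end Signature

section Eigenvalues

variable {n : Type*} [Fintype n] [DecidableEq n]

theorem Matrix.IsHermitian.toQuadraticForm'_equivalent_weightedSumSquares {A : Matrix n n ℝ}
    (hA : A.IsHermitian) :
    A.toQuadraticForm'.Equivalent (weightedSumSquares ℝ hA.eigenvalues) := by
  refine ⟨{ toLinearEquiv := UnitaryGroup.toLinearEquiv (star hA.eigenvectorUnitary),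
            map_app' := fun x => ?_ }⟩
  have hxU : x ᵥ* hA.eigenvectorUnitary = star (hA.eigenvectorUnitary : Matrix n n ℝ) *ᵥ x := by
    rw [star_eq_conjTranspose, conjTranspose_eq_transpose_of_trivial, mulVec_transpose]
  rw [Matrix.toQuadraticForm'_apply]
  conv_rhs => rw [hA.spectral_theorem, Unitary.conjStarAlgAut_apply,
    ← mulVec_mulVec, ← mulVec_mulVec, dotProduct_mulVec, hxU]
  simp [UnitaryGroup.toLinearEquiv, weightedSumSquares_apply, dotProduct, mulVec_diagonal, mul_left_comm]

theorem Matrix.IsHermitian.sigPos_toQuadraticForm' {A : Matrix n n ℝ} (hA : A.IsHermitian) :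
    sigPos A.toQuadraticForm' = (Finset.univ.filter fun i => 0 < hA.eigenvalues i).card := by
  rw [sigPos_of_equiv_weightedSumSquares hA.toQuadraticForm'_equivalent_weightedSumSquares,
    Set.ncard_eq_toFinset_card', Set.toFinset_ofPred]

theorem Matrix.IsHermitian.sigNeg_toQuadraticForm' {A : Matrix n n ℝ} (hA : A.IsHermitian) :
    sigNeg A.toQuadraticForm' = (Finset.univ.filter fun i => hA.eigenvalues i < 0).card := by
  rw [sigNeg_of_equiv_weightedSumSquares hA.toQuadraticForm'_equivalent_weightedSumSquares,
    Set.ncard_eq_toFinset_card', Set.toFinset_ofPred]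

end Eigenvalues

section Blocks

variable {m n 𝕜 : Type*} [Fintype m] [Fintype n] [DecidableEq m] [DecidableEq n]

theorem Matrix.toQuadraticForm'_fromBlocks_sumElim [CommRing 𝕜] (A : Matrix m m 𝕜)
    (B : Matrix m n 𝕜) (D : Matrix n n 𝕜) (x : m → 𝕜) (y : n → 𝕜) :
    (fromBlocks A B Bᵀ D).toQuadraticForm' (Sum.elim x y) =
      x ⬝ᵥ A *ᵥ x + 2 * (x ⬝ᵥ B *ᵥ y) + y ⬝ᵥ D *ᵥ y := by
  rw [toQuadraticForm'_apply, fromBlocks_mulVec, Sum.elim_comp_inl, Sum.elim_comp_inr,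
    sumElim_dotProduct_sumElim, dotProduct_add, dotProduct_add, dotProduct_mulVec y, ← mulVec_transpose, transpose_transpose,
    dotProduct_comm (B *ᵥ y)]
  ring

variable [Field 𝕜] [LinearOrder 𝕜] [IsStrictOrderedRing 𝕜]

theorem Matrix.card_le_sigPos_and_sigNeg_fromBlocks {a : 𝕜} {B : Matrix m n 𝕜}
    (hmn : Fintype.card m ≤ Fintype.card n) (h : a ≠ 0 ∨ Function.Injective Bᵀ.mulVecLin) :
    Fintype.card m ≤ sigPos (fromBlocks (a • 1) B Bᵀ (-(a • 1))).toQuadraticForm' ∧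
      Fintype.card m ≤ sigNeg (fromBlocks (a • 1) B Bᵀ (-(a • 1))).toQuadraticForm' := by
  set Q := (fromBlocks (a • 1) B Bᵀ (-(a • 1))).toQuadraticForm'
  have hQ (x : m → 𝕜) (y : n → 𝕜) :
      Q (Sum.elim x y) = a * (x ⬝ᵥ x) + 2 * (x ⬝ᵥ B *ᵥ y) - a * (y ⬝ᵥ y) := by
    simp only [Q, toQuadraticForm'_fromBlocks_sumElim, neg_mulVec, smul_mulVec, one_mulVec,
      dotProduct_neg, dotProduct_smul, smul_eq_mul]
    ring
  have hBB (x : m → 𝕜) : x ⬝ᵥ B *ᵥ (Bᵀ *ᵥ x) = (Bᵀ *ᵥ x) ⬝ᵥ (Bᵀ *ᵥ x) := by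
    rw [dotProduct_mulVec, ← mulVec_transpose]
  rw [← sigPos_neg, ← Module.finrank_fintype_fun_eq_card (R := 𝕜)]
  have hn : Module.finrank 𝕜 (m → 𝕜) ≤ Module.finrank 𝕜 (n → 𝕜) := by
    simpa only [Module.finrank_fintype_fun_eq_card] using hmn
  rcases lt_trichotomy a 0 with ha | rfl | ha
  · refine ⟨hn.trans <| finrank_le_sigPos_of_pos_sumElim 0 LinearMap.id fun y hy => ?_,
      finrank_le_sigPos_of_pos_sumElim LinearMap.id 0 fun x hx => ?_⟩
    · simpa [hQ] using mul_neg_of_neg_of_pos ha (dotProduct_self_pos hy)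
    · simpa [hQ] using mul_neg_of_neg_of_pos ha (dotProduct_self_pos hx)
  · have hinj := h.resolve_left (not_not.2 rfl)
    refine ⟨finrank_le_sigPos_of_pos_sumElim LinearMap.id Bᵀ.mulVecLin fun x hx => ?_,
      finrank_le_sigPos_of_pos_sumElim LinearMap.id (-Bᵀ.mulVecLin) fun x hx => ?_⟩
    all_goals
      have hBx : Bᵀ *ᵥ x ≠ 0 := (map_ne_zero_iff _ hinj).2 hx
      simp only [_root_.neg_apply, hQ, LinearMap.id_apply, LinearMap.neg_apply,
        mulVecLin_apply, mulVec_neg, dotProduct_neg, hBB]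
      linarith [dotProduct_self_pos hBx]
  · refine ⟨finrank_le_sigPos_of_pos_sumElim LinearMap.id 0 fun x hx => ?_,
      hn.trans <| finrank_le_sigPos_of_pos_sumElim 0 LinearMap.id fun y hy => ?_⟩
    · simpa [hQ] using mul_pos ha (dotProduct_self_pos hx)
    · simpa [hQ] using mul_pos ha (dotProduct_self_pos hy)

end Blocks

theorem sum_smul_Hmat (c : Fin 3 → ℝ) :
    ∑ j, c j • Hmat j =
      fromBlocks (c 2 • 1) (c 0 • R1 + c 1 • R2) (c 0 • R1 + c 1 • R2)ᵀ (-(c 2 • 1)) := by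
  simp [Hmat, Fin.sum_univ_three, fromBlocks_smul, fromBlocks_add]

theorem transpose_mulVec_smul_R1_add_smul_R2 (p q : ℝ) (x : Fin 3 → ℝ) :
    (p • R1 + q • R2)ᵀ *ᵥ x = ![p * x 0, q * x 0 + p * x 1, q * x 1 + p * x 2, q * x 2] := by
  ext i
  fin_cases i <;> simp [R1, R2, mulVec, dotProduct, Fin.sum_univ_three]

theorem mulVecLin_transpose_smul_R1_add_smul_R2_injective {p q : ℝ} (h : p ≠ 0 ∨ q ≠ 0) :
    Function.Injective (p • R1 + q • R2)ᵀ.mulVecLin := by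
  rw [injective_iff_map_eq_zero]
  intro x hx
  obtain ⟨h0, h1, h2, h3⟩ :
      p * x 0 = 0 ∧ q * x 0 + p * x 1 = 0 ∧ q * x 1 + p * x 2 = 0 ∧ q * x 2 = 0 := by
    rw [mulVecLin_apply, transpose_mulVec_smul_R1_add_smul_R2] at hx
    exact ⟨congrFun hx 0, congrFun hx 1, congrFun hx 2, congrFun hx 3⟩
  have : x 0 = 0 ∧ x 1 = 0 ∧ x 2 = 0 := by
    grind
  ext i
  fin_cases i <;> simp [this]

/-- Every nonzero real linear combination `c₁H₁ + c₂H₂ + c₃H₃` of the symmetric `7×7`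
matrices built from `R₁, R₂` has at least 3 positive and at least 3 negative
eigenvalues (with multiplicity). -/
theorem stmt12 (c : Fin 3 → ℝ) (hc : c ≠ 0)
    (M : Matrix (Fin 3 ⊕ Fin 4) (Fin 3 ⊕ Fin 4) ℝ)
    (hM : M = ∑ j, c j • Hmat j) :
    ∃ hHerm : M.IsHermitian,
      3 ≤ (Finset.univ.filter fun i => 0 < hHerm.eigenvalues i).card ∧
      3 ≤ (Finset.univ.filter fun i => hHerm.eigenvalues i < 0).card := by
  rw [sum_smul_Hmat] at hM
  subst hM
  set B := c 0 • R1 + c 1 • R2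
  have hB : c 2 ≠ 0 ∨ Function.Injective Bᵀ.mulVecLin := by
    by_contra! h
    refine h.2 (mulVecLin_transpose_smul_R1_add_smul_R2_injective ?_)
    by_contra! h01
    exact hc (by ext i; fin_cases i <;> simp [h.1, h01.1, h01.2])
  have hHerm : (fromBlocks (c 2 • 1) B Bᵀ (-(c 2 • 1))).IsHermitian :=
    IsHermitian.fromBlocks (by simp [IsHermitian]) (conjTranspose_eq_transpose_of_trivial B)
      (by simp [IsHermitian])
  obtain ⟨hpos, hneg⟩ := card_le_sigPos_and_sigNeg_fromBlocks (by simp) hB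
  refine ⟨hHerm, ?_, ?_⟩
  · rw [← hHerm.sigPos_toQuadraticForm']
    simpa using hpos
  · rw [← hHerm.sigNeg_toQuadraticForm']
    simpa using hneg
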